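/- Operator inequality for bipartite positive operators: Let ξ_AB be a positive semidefinite operator on H_A ⊗ H_B and ξ_B = tr_A(ξ_AB). Then ξ_AB ≤ |A| · (I_A ⊗ ξ_B) in the Loewner order. -/

import Mathlib

open scoped Kronecker ComplexOrder Classical
open Matrix MeasureTheory

noncomputable section

/-- Positive semidefinite square root (junk value `0` if not PSD). -/
def psqrt {n : Type*} [Fintype n] [DecidableEq n] (ρ : Matrix n n ℂ) : Matrix n n ℂ :=
  if h : ρ.PosSemidef then
    (h.1.eigenvectorUnitary : Matrix n n ℂ) *
      Matrix.diagonal ((↑) ∘ (Real.sqrt ·) ∘ h.1.eigenvalues) *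
      (star h.1.eigenvectorUnitary : Matrix n n ℂ)
  else 0

/-- Trace norm `‖M‖₁ = tr √(MᴴM)`. -/
def traceNorm {n : Type*} [Fintype n] [DecidableEq n] (M : Matrix n n ℂ) : ℝ :=
  (psqrt (Mᴴ * M)).trace.re

/-- Moore–Penrose real power of a Hermitian matrix via the spectral decomposition
(junk value `0` for non-Hermitian input).  For negative exponents, zero eigenvalues are
sent to zero (`Real.rpow` convention), i.e. inverses are generalized inverses. -/
def mpow {n : Type*} [Fintype n] [DecidableEq n] (ρ : Matrix n n ℂ) (p : ℝ) : Matrix n n ℂ :=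
  if h : ρ.IsHermitian then
    (h.eigenvectorUnitary : Matrix n n ℂ) *
      Matrix.diagonal (fun i => ((h.eigenvalues i ^ p : ℝ) : ℂ)) *
      (star h.eigenvectorUnitary : Matrix n n ℂ)
  else 0

/-- Subnormalized state: positive semidefinite with trace at most one. -/
def IsSubnormalized {n : Type*} [Fintype n] (ρ : Matrix n n ℂ) : Prop :=
  ρ.PosSemidef ∧ ρ.trace.re ≤ 1

/-- Normalized state: positive semidefinite with trace one. -/
def IsState {n : Type*} [Fintype n] (ρ : Matrix n n ℂ) : Prop :=
  ρ.PosSemidef ∧ ρ.trace = 1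

/-- Fidelity `F(ρ,σ) = ‖√ρ √σ‖₁`. -/
def fidelity {n : Type*} [Fintype n] [DecidableEq n] (ρ σ : Matrix n n ℂ) : ℝ :=
  traceNorm (psqrt ρ * psqrt σ)

/-- Generalized fidelity of subnormalized states. -/
def gFidelity {n : Type*} [Fintype n] [DecidableEq n] (ρ σ : Matrix n n ℂ) : ℝ :=
  fidelity ρ σ + Real.sqrt ((1 - ρ.trace.re) * (1 - σ.trace.re))

/-- Purified distance `P(ρ,σ) = √(1 − F̄(ρ,σ)²)`. -/
def pdist {n : Type*} [Fintype n] [DecidableEq n] (ρ σ : Matrix n n ℂ) : ℝ :=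
  Real.sqrt (1 - gFidelity ρ σ ^ 2)

/-- Partial trace over the first tensor factor. -/
def ptraceFst {a b : Type*} [Fintype a] (M : Matrix (a × b) (a × b) ℂ) : Matrix b b ℂ :=
  Matrix.of fun i j => ∑ k, M (k, i) (k, j)

/-- Partial trace over the second tensor factor. -/
def ptraceSnd {a b : Type*} [Fintype b] (M : Matrix (a × b) (a × b) ℂ) : Matrix a a ℂ :=
  Matrix.of fun i j => ∑ k, M (i, k) (j, k)

/-- Min-entropy `H_min(A|B)_ρ`, conditioning on the second factor. -/
def Hmin {a b : Type*} [Fintype a] [Fintype b] [DecidableEq a] [DecidableEq b]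
    (ρ : Matrix (a × b) (a × b) ℂ) : ℝ :=
  sSup {x : ℝ | ∃ σ : Matrix b b ℂ, IsState σ ∧
    (((2 : ℝ) ^ (-x) : ℝ) • ((1 : Matrix a a ℂ) ⊗ₖ σ) - ρ).PosSemidef}

/-- Max-entropy `H_max(A|B)_ρ`, conditioning on the second factor. -/
def Hmax {a b : Type*} [Fintype a] [Fintype b] [DecidableEq a] [DecidableEq b]
    (ρ : Matrix (a × b) (a × b) ℂ) : ℝ :=
  sSup {x : ℝ | ∃ σ : Matrix b b ℂ, IsState σ ∧
    x = Real.logb 2 (fidelity ρ ((1 : Matrix a a ℂ) ⊗ₖ σ) ^ 2)}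

/-- Smooth min-entropy `H_min^ε(A|B)_ρ`. -/
def sHmin {a b : Type*} [Fintype a] [Fintype b] [DecidableEq a] [DecidableEq b]
    (ε : ℝ) (ρ : Matrix (a × b) (a × b) ℂ) : ℝ :=
  sSup {x : ℝ | ∃ ρ' : Matrix (a × b) (a × b) ℂ,
    IsSubnormalized ρ' ∧ pdist ρ ρ' ≤ ε ∧ x = Hmin ρ'}

/-- Unconditional min-entropy `H_min(A)_ρ = −log‖ρ‖_∞`. -/
def HminU {n : Type*} [Fintype n] [DecidableEq n] (ρ : Matrix n n ℂ) : ℝ :=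
  -Real.logb 2 ‖Matrix.toEuclideanCLM (𝕜 := ℂ) ρ‖

/-- Unconditional max-entropy `H_max(A)_ρ = 2 log tr √ρ`. -/
def HmaxU {n : Type*} [Fintype n] [DecidableEq n] (ρ : Matrix n n ℂ) : ℝ :=
  2 * Real.logb 2 ((psqrt ρ).trace.re)

/-- Smooth unconditional min-entropy. -/
def sHminU {n : Type*} [Fintype n] [DecidableEq n] (ε : ℝ) (ρ : Matrix n n ℂ) : ℝ :=
  sSup {x : ℝ | ∃ ρ' : Matrix n n ℂ, IsSubnormalized ρ' ∧ pdist ρ ρ' ≤ ε ∧ x = HminU ρ'}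

/-- Smooth unconditional max-entropy. -/
def sHmaxU {n : Type*} [Fintype n] [DecidableEq n] (ε : ℝ) (ρ : Matrix n n ℂ) : ℝ :=
  sInf {x : ℝ | ∃ ρ' : Matrix n n ℂ, IsSubnormalized ρ' ∧ pdist ρ ρ' ≤ ε ∧ x = HmaxU ρ'}

/-- Collision entropy `H₂(A|B)_ρ`. -/
def H2 {a b : Type*} [Fintype a] [Fintype b] [DecidableEq a] [DecidableEq b]
    (ρ : Matrix (a × b) (a × b) ℂ) : ℝ :=
  sSup {x : ℝ | ∃ σ : Matrix b b ℂ, IsState σ ∧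
    x = -Real.logb 2
      (((((1 : Matrix a a ℂ) ⊗ₖ mpow σ (-(1/4))) * ρ *
          ((1 : Matrix a a ℂ) ⊗ₖ mpow σ (-(1/4)))) ^ 2).trace.re)}

/-- The extension `𝟙_n ⊗ T` of a linear map `T` on matrices, acting on the second factor. -/
def idTensorLmap {A B n : Type*} [Fintype A] [Fintype B] [Fintype n]
    (T : Matrix A A ℂ →ₗ[ℂ] Matrix B B ℂ) (M : Matrix (n × A) (n × A) ℂ) :
    Matrix (n × B) (n × B) ℂ :=
  Matrix.of fun i j => T (Matrix.of fun a a' => M (i.1, a) (j.1, a')) i.2 j.2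

/-- The extension `T ⊗ 𝟙_n` of a linear map `T` on matrices, acting on the first factor. -/
def lmapTensorId {A B n : Type*} [Fintype A] [Fintype B] [Fintype n]
    (T : Matrix A A ℂ →ₗ[ℂ] Matrix B B ℂ) (M : Matrix (A × n) (A × n) ℂ) :
    Matrix (B × n) (B × n) ℂ :=
  Matrix.of fun i j => T (Matrix.of fun a a' => M (a, i.2) (a', j.2)) i.1 j.1

/-- Complete positivity of a linear map on matrices. -/
def IsCPM {A B : Type*} [Fintype A] [Fintype B]
    (T : Matrix A A ℂ →ₗ[ℂ] Matrix B B ℂ) : Prop :=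
  ∀ (n : ℕ) (M : Matrix (Fin n × A) (Fin n × A) ℂ),
    M.PosSemidef → (idTensorLmap T M).PosSemidef

/-- The projector `|Φ⟩⟨Φ|` onto the maximally entangled state
`|Φ⟩ = |A|^{-1/2} ∑ₓ |x⟩|x⟩`. -/
def maxEntProj (A : Type*) [Fintype A] [DecidableEq A] : Matrix (A × A) (A × A) ℂ :=
  Matrix.of fun p q =>
    ((if p.1 = p.2 then 1 else 0) * (if q.1 = q.2 then 1 else 0)) / (Fintype.card A : ℂ)

/-- Choi–Jamiołkowski representation `J(T) = (𝟙_{A'} ⊗ T)(|Φ⟩⟨Φ|)`. -/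
def choi {A B : Type*} [Fintype A] [Fintype B] [DecidableEq A]
    (T : Matrix A A ℂ →ₗ[ℂ] Matrix B B ℂ) : Matrix (A × B) (A × B) ℂ :=
  idTensorLmap T (maxEntProj A)

/-- Conjugation of a bipartite operator by `U ⊗ 𝟙_E`. -/
def conjFst {A E : Type*} [Fintype A] [Fintype E] [DecidableEq A] [DecidableEq E]
    (U : Matrix.unitaryGroup A ℂ) (ρ : Matrix (A × E) (A × E) ℂ) :
    Matrix (A × E) (A × E) ℂ :=
  ((U : Matrix A A ℂ) ⊗ₖ (1 : Matrix E E ℂ)) * ρ *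
    (((U : Matrix A A ℂ)ᴴ) ⊗ₖ (1 : Matrix E E ℂ))

/-- The swap operator `F(u ⊗ v) = v ⊗ u` as a matrix. -/
def swapMat (A : Type*) [Fintype A] [DecidableEq A] : Matrix (A × A) (A × A) ℂ :=
  Matrix.of fun i j => if i.1 = j.2 ∧ i.2 = j.1 then 1 else 0


attribute [local instance] Matrix.frobeniusNormedAddCommGroup Matrix.frobeniusNormedSpace

/-!
Pinching with the projections `Pₐ = |a⟩⟨a| ⊗ 1` gives `ξ ≤ |A| ∑ₐ Pₐ ξ Pₐ`, an instance of the
operator Cauchy–Schwarz bound `(∑ᵢ Mᵢ)ᴴ ξ (∑ᵢ Mᵢ) ≤ n ∑ᵢ Mᵢᴴ ξ Mᵢ`, which in turn is the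
positivity of `∑ᵢⱼ (Mᵢ - Mⱼ)ᴴ ξ (Mᵢ - Mⱼ)`. The pinched operator is the `k = a` part of
`1 ⊗ ξ_B = ∑ₐₖ (|k⟩⟨a| ⊗ 1)ᴴ ξ (|k⟩⟨a| ⊗ 1)`, whose other terms are positive.
-/

open scoped MatrixOrder

lemma sum_sum_conjTranspose_sub_mul_mul_sub {R m n ι : Type*} [Ring R] [StarRing R]
    [Fintype m] (ξ : Matrix m m R) (s : Finset ι) (M : ι → Matrix m n R) :
    ∑ i ∈ s, ∑ j ∈ s, (M i - M j)ᴴ * ξ * (M i - M j) =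
      2 • (s.card • ∑ i ∈ s, (M i)ᴴ * ξ * M i - (∑ i ∈ s, M i)ᴴ * ξ * ∑ i ∈ s, M i) := by
  simp only [conjTranspose_sub, conjTranspose_sum, Matrix.sub_mul, Matrix.mul_sub,
    Matrix.sum_mul, Matrix.mul_sum, Finset.sum_sub_distrib, Finset.sum_const, ← Finset.smul_sum,
    smul_sub, two_nsmul]
  rw [Finset.sum_comm (f := fun i j => (M j)ᴴ * ξ * M i)]
  abel

lemma conjTranspose_sum_mul_mul_sum_le {𝕜 m n ι : Type*} [RCLike 𝕜] [Fintype m] [Fintype n]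
    {ξ : Matrix m m 𝕜} (hξ : ξ.PosSemidef) (s : Finset ι) (M : ι → Matrix m n 𝕜) :
    (∑ i ∈ s, M i)ᴴ * ξ * ∑ i ∈ s, M i ≤ s.card • ∑ i ∈ s, (M i)ᴴ * ξ * M i := by
  have h : (2 • (s.card • ∑ i ∈ s, (M i)ᴴ * ξ * M i -
      (∑ i ∈ s, M i)ᴴ * ξ * ∑ i ∈ s, M i)).PosSemidef := by
    rw [← sum_sum_conjTranspose_sub_mul_mul_sub]
    exact posSemidef_sum _ fun i _ => posSemidef_sum _ fun j _ =>
      hξ.conjTranspose_mul_mul_same _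
  rw [Matrix.le_iff]
  simpa [← Nat.cast_smul_eq_nsmul ℝ, smul_smul] using h.smul (a := (2⁻¹ : ℝ)) (by norm_num)

section PartialTrace

variable {A B : Type*} [Fintype A] [DecidableEq A] [DecidableEq B]

lemma sum_single_kronecker_one {R : Type*} [Semiring R] :
    ∑ a : A, single a a (1 : R) ⊗ₖ (1 : Matrix B B R) = 1 := by
  ext ⟨a₁, b₁⟩ ⟨a₂, b₂⟩
  simp only [Matrix.sum_apply, kroneckerMap_apply, ← Finset.sum_mul]
  rw [← Matrix.sum_apply, sum_single_one, ← one_kronecker_one, kroneckerMap_apply]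

variable [Fintype B]

lemma conjTranspose_single_kronecker_one_mul_mul_apply {R : Type*} [CommSemiring R] [StarRing R]
    (ξ : Matrix (A × B) (A × B) R) (a k : A) (p q : A × B) :
    ((single k a 1 ⊗ₖ 1)ᴴ * ξ * (single k a 1 ⊗ₖ 1) : Matrix (A × B) (A × B) R) p q =
      if p.1 = a ∧ q.1 = a then ξ (k, p.2) (k, q.2) else 0 := by
  obtain ⟨a₁, b₁⟩ := p
  obtain ⟨a₂, b₂⟩ := q
  simp only [conjTranspose_kronecker, conjTranspose_single, star_one, conjTranspose_one]
  simp only [Matrix.mul_apply, kroneckerMap_apply, single_apply, ite_and, one_apply, mul_ite,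
    mul_one, mul_zero, ite_mul, one_mul, zero_mul, Fintype.sum_prod_type, Finset.sum_ite_eq,
    Finset.mem_univ, if_true, Finset.sum_ite_irrel, Finset.sum_const_zero, Finset.sum_ite_eq']
  grind

lemma one_kronecker_ptraceFst (ξ : Matrix (A × B) (A × B) ℂ) :
    (1 : Matrix A A ℂ) ⊗ₖ ptraceFst ξ =
      ∑ a, ∑ k, (single k a 1 ⊗ₖ 1 : Matrix (A × B) (A × B) ℂ)ᴴ * ξ * (single k a 1 ⊗ₖ 1) := by
  ext ⟨a₁, b₁⟩ ⟨a₂, b₂⟩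
  simp only [ptraceFst, kroneckerMap_apply, one_apply, of_apply, ite_mul, one_mul, zero_mul,
    Matrix.sum_apply, conjTranspose_single_kronecker_one_mul_mul_apply, ite_and,
    Finset.sum_ite_irrel, Finset.sum_const_zero, Finset.sum_ite_eq, Finset.mem_univ, if_true]
  grind

end PartialTrace

theorem bipartite_operator_inequality_general
    {A B : Type*} [Fintype A] [DecidableEq A] [Fintype B]
    (ξ : Matrix (A × B) (A × B) ℂ) (hξ : ξ.PosSemidef) :
    ((Fintype.card A : ℂ) • ((1 : Matrix A A ℂ) ⊗ₖ ptraceFst ξ) - ξ).PosSemidef := by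
  let E (k a : A) : Matrix (A × B) (A × B) ℂ := single k a 1 ⊗ₖ 1
  have pinching : ξ ≤ Fintype.card A • ∑ a, (E a a)ᴴ * ξ * E a a := by
    simpa [E, sum_single_kronecker_one] using
      conjTranspose_sum_mul_mul_sum_le hξ Finset.univ fun a => E a a
  have pinched_le : ∑ a, (E a a)ᴴ * ξ * E a a ≤ 1 ⊗ₖ ptraceFst ξ := by
    rw [one_kronecker_ptraceFst]
    exact Finset.sum_le_sum fun a _ => Finset.single_le_sum (f := fun k => (E k a)ᴴ * ξ * E k a)
      (fun k _ => (hξ.conjTranspose_mul_mul_same _).nonneg) (Finset.mem_univ a)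
  rw [← Matrix.le_iff, Nat.cast_smul_eq_nsmul]
  exact pinching.trans (nsmul_le_nsmul_right pinched_le _)

/-- **Operator inequality for bipartite positive operators:** `ξ_AB ≤ |A| · (I_A ⊗ ξ_B)`. -/
theorem bipartite_operator_inequality
    {A B : Type*} [Fintype A] [DecidableEq A] [Fintype B] [DecidableEq B]
    (ξ : Matrix (A × B) (A × B) ℂ) (hξ : ξ.PosSemidef) :
    ((Fintype.card A : ℂ) • ((1 : Matrix A A ℂ) ⊗ₖ ptraceFst ξ) - ξ).PosSemidef :=
  bipartite_operator_inequality_general ξ hξ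

end
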